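/- arXiv:2306.11940 — 6 statements merged into one kernel-verified Lean document; each statement's English description precedes it below -/
import Mathlib

section
/- Let G and H be finite abelian groups and let d ≥ 1 be an integer. Then there is an isomorphism of abelian groups Hmg^d(G,H) ≅ Hmg^d(G, ℚ/ℤ) ⊗ H (tensor product over ℤ). -/
open scoped DirectSum

noncomputable section

/-- `ℚ/ℤ`, the quotient of the rationals by the integers. -/
abbrev QZ : Type := AddCircle (1 : ℚ)

/-- The group of homogeneous functions of degree `d` from `G` to `H`, i.e. functions `f` with
`f (n • x) = n ^ d • f x` for every `x : G` and every integer `n` coprime to the order of `x`,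
as an additive subgroup of `G → H` under pointwise addition. -/
def Hmg (d : ℕ) (G H : Type*) [AddCommGroup G] [AddCommGroup H] : AddSubgroup (G → H) where
  carrier := {f | ∀ (x : G) (n : ℤ), IsCoprime n (addOrderOf x : ℤ) → f (n • x) = n ^ d • f x}
  zero_mem' := by intro x n _; simp
  add_mem' := by
    intro f g hf hg x n h
    simp only [Pi.add_apply, hf x n h, hg x n h, smul_add]
  neg_mem' := by
    intro f hf x n h
    simp only [Pi.neg_apply, hf x n h, smul_neg]

/-!
A homogeneous function is determined by its values at one generator of each cyclic subgroup
`C ≤ G`. If the generator has order `m`, its value may be any element killed by the integers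
`n ^ d - n' ^ d` with `n ≡ n' [ZMOD m]` coprime to `m`, i.e. any element of `H[e_C]`, where `e_C`
generates the ideal these integers span; `e_C ≠ 0` as soon as `d ≥ 1`. Hence
`Hmg^d(G, H) ≅ ∏_C H[e_C]`, and in particular `Hmg^d(G, ℚ/ℤ) ≅ ∏_C ℤ/e_C`, since `(ℚ/ℤ)[e]` is
cyclic of order `e`. It remains to see that `ℤ/e ⊗ H ≅ H/eH ≅ H[e]` for finite `H`: by the
structure theorem it suffices to treat cyclic `H`, where both sides are cyclic, and of the same
order because the kernel and the cokernel of multiplication by `e` on a finite group have the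
same size.
-/

open AddSubgroup TensorProduct

section CyclicClass

variable {G : Type*} [AddCommGroup G]

theorem zmultiples_zsmul_eq_self_iff {x : G} {n : ℤ} :
    zmultiples (n • x) = zmultiples x ↔ IsCoprime n (addOrderOf x) := by
  rw [Int.isCoprime_iff_gcd_eq_one, ← mem_zmultiples_zsmul_iff]
  refine ⟨fun h => h ▸ mem_zmultiples x, fun h => le_antisymm ?_ (zmultiples_le.2 h)⟩
  exact zmultiples_le.2 (zsmul_mem (mem_zmultiples x) n)

theorem exists_isCoprime_zsmul_eq_of_zmultiples_eq {x y : G}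
    (h : zmultiples x = zmultiples y) : ∃ n : ℤ, IsCoprime n (addOrderOf x) ∧ n • x = y := by
  obtain ⟨n, rfl⟩ := mem_zmultiples_iff.1 (h ▸ mem_zmultiples y)
  exact ⟨n, zmultiples_zsmul_eq_self_iff.1 h.symm, rfl⟩

theorem addOrderOf_eq_of_zmultiples_eq {x y : G} (h : zmultiples x = zmultiples y) :
    addOrderOf x = addOrderOf y := by
  rw [← Nat.card_zmultiples, h, Nat.card_zmultiples]

/-- A class is a cyclic subgroup of `G`; `Quotient.out` picks a generator of it. -/
abbrev CyclicClass (G : Type*) [AddCommGroup G] : Type _ :=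
  Quotient (Setoid.ker (zmultiples : G → AddSubgroup G))

theorem CyclicClass.zmultiples_out (y : G) :
    zmultiples (⟦y⟧ : CyclicClass G).out = zmultiples y :=
  Setoid.ker_apply_mk_out y

theorem CyclicClass.exists_zsmul_out_eq (y : G) :
    ∃ n : ℤ, IsCoprime n (addOrderOf (⟦y⟧ : CyclicClass G).out) ∧
      n • (⟦y⟧ : CyclicClass G).out = y :=
  exists_isCoprime_zsmul_eq_of_zmultiples_eq (CyclicClass.zmultiples_out y)

end CyclicClass

section TorsionBy

variable {A B : Type*} [AddCommGroup A] [AddCommGroup B]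

theorem AddSubgroup.mem_torsionBy_iff {n : ℤ} {x : A} : x ∈ torsionBy A n ↔ n • x = 0 :=
  Submodule.mem_torsionBy_iff n x

def AddSubgroup.torsionByCongr (φ : A ≃+ B) (n : ℤ) : torsionBy A n ≃+ torsionBy B n :=
  (φ.addSubgroupMap _).trans <| AddEquiv.addSubgroupCongr <| by
    ext x
    rw [show (φ : A →+ B) = φ.toAddMonoidHom from rfl, mem_map_equiv, mem_torsionBy_iff,
      mem_torsionBy_iff, ← map_zsmul, AddEquiv.map_eq_zero_iff]

def AddSubgroup.torsionByPiEquiv {ι : Type*} (A : ι → Type*) [∀ i, AddCommGroup (A i)] (n : ℤ) :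
    torsionBy (∀ i, A i) n ≃+ ∀ i, torsionBy (A i) n where
  toFun x i := ⟨x.1 i, mem_torsionBy_iff.2 (congrFun (mem_torsionBy_iff.1 x.2) i)⟩
  invFun y := ⟨fun i => y i, mem_torsionBy_iff.2 (funext fun i => mem_torsionBy_iff.1 (y i).2)⟩
  left_inv _ := rfl
  right_inv _ := rfl
  map_add' _ _ := rfl

end TorsionBy

section HomogeneityExponent

/-- If `x` has order `m` and `n • x = n' • x` with `n, n'` coprime to `m`, homogeneity forces
`(n ^ d - n' ^ d) • f x = 0`; these are all the constraints on the value `f x`. -/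
def homogeneityRelations (d m : ℕ) : Set ℤ :=
  {z | ∃ n n' : ℤ, IsCoprime n m ∧ IsCoprime n' m ∧ (m : ℤ) ∣ n - n' ∧ n ^ d - n' ^ d = z}

def homogeneityExponent (d m : ℕ) : ℕ :=
  (Submodule.IsPrincipal.generator (Ideal.span (homogeneityRelations d m))).natAbs

variable {M : Type*} [AddCommGroup M] {d m : ℕ}

theorem mem_torsionBy_homogeneityExponent_iff {v : M} :
    v ∈ torsionBy M (homogeneityExponent d m) ↔ ∀ z ∈ homogeneityRelations d m, z • v = 0 := by
  have hspan : Ideal.span {(homogeneityExponent d m : ℤ)} =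
      Ideal.span (homogeneityRelations d m) := by
    rw [homogeneityExponent, Int.span_natAbs]
    exact Submodule.IsPrincipal.span_singleton_generator _
  rw [Submodule.mem_toAddSubgroup, ← Submodule.torsionBySet_ideal_span_singleton_eq, hspan,
    ← Submodule.torsionBySet_eq_torsionBySet_span, Submodule.mem_torsionBySet_iff,
    Subtype.forall]

theorem homogeneityExponent_ne_zero (hd : d ≠ 0) (hm : m ≠ 0) :
    homogeneityExponent d m ≠ 0 := by
  -- otherwise `1 : ℤ` would be killed by every relation, e.g. by `(1 + m) ^ d - 1 > 0`
  intro h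
  have hone : (1 : ℤ) ∈ torsionBy ℤ (homogeneityExponent d m) := by simp [h]
  have hrel : (1 + m : ℤ) ^ d - 1 ^ d ∈ homogeneityRelations d m :=
    ⟨1 + m, 1, by simpa using (isCoprime_one_left (x := (m : ℤ))).add_mul_right_left 1,
      isCoprime_one_left, ⟨1, by ring⟩, rfl⟩
  have hgt : (1 : ℤ) < (1 + m) ^ d := one_lt_pow₀ (by omega) hd
  have := mem_torsionBy_homogeneityExponent_iff.1 hone _ hrel
  simp only [smul_eq_mul, mul_one, one_pow] at this
  omega

variable {G : Type*} [AddCommGroup G]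

theorem pow_smul_eq_of_zsmul_eq {x : G} {v : M}
    (hv : v ∈ torsionBy M (homogeneityExponent d (addOrderOf x))) {n n' : ℤ}
    (hn : IsCoprime n (addOrderOf x)) (hn' : IsCoprime n' (addOrderOf x)) (h : n • x = n' • x) :
    n ^ d • v = n' ^ d • v := by
  have hdvd : (addOrderOf x : ℤ) ∣ n - n' := by
    rw [addOrderOf_dvd_iff_zsmul_eq_zero, sub_smul, h, sub_self]
  have := mem_torsionBy_homogeneityExponent_iff.1 hv _ ⟨n, n', hn, hn', hdvd, rfl⟩
  rwa [sub_smul, sub_eq_zero] at this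

theorem mem_torsionBy_homogeneityExponent_of_mem_hmg {f : G → M} (hf : f ∈ Hmg d G M) (x : G) :
    f x ∈ torsionBy M (homogeneityExponent d (addOrderOf x)) := by
  rw [mem_torsionBy_homogeneityExponent_iff]
  rintro _ ⟨n, n', hn, hn', hdvd, rfl⟩
  have hx : n • x = n' • x := by
    rw [← sub_eq_zero, ← sub_smul]
    exact addOrderOf_dvd_iff_zsmul_eq_zero.1 hdvd
  rw [sub_smul, ← hf x n hn, ← hf x n' hn', hx, sub_self]

end HomogeneityExponent

section ClassValues

abbrev ClassValues (d : ℕ) (G M : Type*) [AddCommGroup G] [AddCommGroup M] : Type _ :=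
  ∀ s : CyclicClass G, torsionBy M (homogeneityExponent d (addOrderOf s.out))

variable {d : ℕ} {G M : Type*} [AddCommGroup G] [AddCommGroup M]

def ClassValues.extend (t : ClassValues d G M) (y : G) : M :=
  (CyclicClass.exists_zsmul_out_eq y).choose ^ d • (t ⟦y⟧ : M)

theorem ClassValues.extend_eq (t : ClassValues d G M) {y : G} {s : CyclicClass G}
    (hs : ⟦y⟧ = s) {n : ℤ} (hn : IsCoprime n (addOrderOf s.out)) (hy : n • s.out = y) :
    t.extend y = n ^ d • (t s : M) := by
  subst hs
  obtain ⟨hc, hcy⟩ := (CyclicClass.exists_zsmul_out_eq y).choose_spec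
  exact pow_smul_eq_of_zsmul_eq (t _).2 hc hn (hcy.trans hy.symm)

theorem ClassValues.extend_mem_hmg (t : ClassValues d G M) : t.extend ∈ Hmg d G M := by
  intro y k hk
  obtain ⟨hc, hcy⟩ := (CyclicClass.exists_zsmul_out_eq y).choose_spec
  have hord : addOrderOf (⟦y⟧ : CyclicClass G).out = addOrderOf y :=
    addOrderOf_eq_of_zmultiples_eq (CyclicClass.zmultiples_out y)
  have hclass : (⟦k • y⟧ : CyclicClass G) = ⟦y⟧ :=
    Quotient.sound (zmultiples_zsmul_eq_self_iff.2 hk)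
  have hk' : IsCoprime k (addOrderOf (⟦y⟧ : CyclicClass G).out) := by rwa [hord]
  rw [t.extend_eq hclass (hk'.mul_left hc) (by rw [mul_smul, hcy]), mul_pow, mul_smul]
  rfl

def ClassValues.ofHmg (f : Hmg d G M) : ClassValues d G M :=
  fun s => ⟨f.1 s.out, mem_torsionBy_homogeneityExponent_of_mem_hmg f.2 s.out⟩

theorem ClassValues.extend_ofHmg (f : Hmg d G M) : (ClassValues.ofHmg f).extend = f := by
  funext y
  obtain ⟨n, hn, hny⟩ := CyclicClass.exists_zsmul_out_eq y
  exact ((ofHmg f).extend_eq rfl hn hny).trans ((f.2 _ n hn).symm.trans (congrArg f.1 hny))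

def hmgEquivClassValues : Hmg d G M ≃+ ClassValues d G M where
  toFun := ClassValues.ofHmg
  invFun t := ⟨t.extend, t.extend_mem_hmg⟩
  left_inv f := Subtype.ext (ClassValues.extend_ofHmg f)
  right_inv t := by
    funext s
    ext
    exact (t.extend_eq (Quotient.out_eq s) isCoprime_one_left (one_smul ℤ _)).trans
      (by rw [one_pow, one_smul])
  map_add' _ _ := rfl

end ClassValues

section TensorZMod

open scoped Pointwise

variable (e : ℕ) (A : Type*) [AddCommGroup A]

def tensorZModEquivQuotSMul : ZMod e ⊗[ℤ] A ≃ₗ[ℤ] A ⧸ (e : ℤ) • (⊤ : Submodule ℤ A) :=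
  (TensorProduct.congr (Int.quotientSpanNatEquivZMod e).toAddEquiv.toIntLinearEquiv.symm
    (LinearEquiv.refl ℤ A)).trans <|
  (quotTensorEquivQuotSMul A _).trans <|
  Submodule.quotEquivOfEq _ _ (Submodule.ideal_span_singleton_smul _ _)

theorem nat_card_quotient_smul_top_eq_nat_card_torsionBy [Finite A] :
    Nat.card (A ⧸ (e : ℤ) • (⊤ : Submodule ℤ A)) = Nat.card (torsionBy A e) := by
  let f := DistribSMul.toLinearMap ℤ A (e : ℤ)
  have hrange : (e : ℤ) • (⊤ : Submodule ℤ A) = LinearMap.range f := by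
    ext x
    simp [Submodule.mem_smul_pointwise_iff_exists, f]
  have hker := Submodule.card_eq_card_quotient_mul_card (LinearMap.ker f)
  have hrng := Submodule.card_eq_card_quotient_mul_card (LinearMap.range f)
  rw [Nat.card_congr f.quotKerEquivRange.toEquiv] at hker
  rw [hrange]
  exact Nat.eq_of_mul_eq_mul_left Nat.card_pos (hrng.symm.trans (hker.trans (mul_comm _ _)))

def tensorZModEquivTorsionByOfIsAddCyclic [Finite A] [IsAddCyclic A] :
    ZMod e ⊗[ℤ] A ≃+ torsionBy A e :=
  have : IsAddCyclic (A ⧸ (e : ℤ) • (⊤ : Submodule ℤ A)) :=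
    isAddCyclic_of_surjective _ (Submodule.mkQ_surjective _)
  (tensorZModEquivQuotSMul e A).toAddEquiv.trans
    (addEquivOfAddCyclicCardEq (nat_card_quotient_smul_top_eq_nat_card_torsionBy e A))

theorem nonempty_tensorZModEquivTorsionBy [Finite A] :
    Nonempty (ZMod e ⊗[ℤ] A ≃+ torsionBy A e) := by
  classical
  obtain ⟨ι, _, p, hp, k, ⟨ψ⟩⟩ := AddCommGroup.equiv_directSum_zmod_of_finite A
  have (i : ι) : NeZero (p i ^ k i) := ⟨pow_ne_zero _ (hp i).ne_zero⟩
  let φ : A ≃+ ∀ i, ZMod (p i ^ k i) :=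
    ψ.trans (DirectSum.linearEquivFunOnFintype ℤ ι _).toAddEquiv
  exact ⟨(TensorProduct.congr (LinearEquiv.refl ℤ (ZMod e)) φ.toIntLinearEquiv).toAddEquiv.trans <|
    (TensorProduct.piRight ℤ ℤ (ZMod e) _).toAddEquiv.trans <|
    (AddEquiv.piCongrRight fun i => tensorZModEquivTorsionByOfIsAddCyclic e _).trans <|
    (torsionByPiEquiv _ e).symm.trans (torsionByCongr φ.symm e)⟩

end TensorZMod

section AddCircle

variable {𝕜 : Type*} [Field 𝕜] [LinearOrder 𝕜] [IsStrictOrderedRing 𝕜] {p : 𝕜} {n : ℕ}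

theorem AddCircle.period_div_mem_torsionBy [Fact (0 < p)] (hn : n ≠ 0) :
    ((p / n : 𝕜) : AddCircle p) ∈ torsionBy (AddCircle p) n := by
  rw [mem_torsionBy_iff, natCast_zsmul]
  exact addOrderOf_dvd_iff_nsmul_eq_zero.1 (addOrderOf_period_div (Nat.pos_of_ne_zero hn)).dvd

theorem AddCircle.finite_torsionBy_and_nat_card_le (hn : n ≠ 0) :
    (torsionBy (AddCircle p) n : Set (AddCircle p)).Finite ∧
      Nat.card (torsionBy (AddCircle p) n) ≤ n := by
  have hset : (torsionBy (AddCircle p) n : Set (AddCircle p)) = {u | n • u = 0} := by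
    ext u
    simp [natCast_zsmul]
  have hle := AddCircle.card_torsion_le_of_isSMulRegular p n hn
    (.of_right_eq_zero_of_smul fun _ ↦ by simp [hn])
  rw [← hset, Set.encard_le_coe_iff_finite_ncard_le] at hle
  rwa [← SetLike.coe_sort_coe, Nat.card_coe_set_eq]

def AddCircle.zmodEquivTorsionBy [Fact (0 < p)] (hn : n ≠ 0) :
    ZMod n ≃+ torsionBy (AddCircle p) n :=
  have hmem := AddCircle.period_div_mem_torsionBy (p := p) hn
  have hord := AddCircle.addOrderOf_period_div (p := p) (Nat.pos_of_ne_zero hn)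
  have ⟨hfin, hle⟩ := AddCircle.finite_torsionBy_and_nat_card_le (p := p) hn
  have : Finite (torsionBy (AddCircle p) n) := hfin.to_subtype
  have hcard : Nat.card (torsionBy (AddCircle p) n) = n :=
    le_antisymm hle (by simpa [hord] using AddSubgroup.addOrderOf_le_card _ hfin hmem)
  have := isAddCyclic_of_addOrderOf_eq_card (⟨_, hmem⟩ : torsionBy (AddCircle p) n)
    (by rw [addOrderOf_mk, hord, hcard])
  addEquivOfAddCyclicCardEq (by rw [Nat.card_zmod, hcard])

end AddCircle

theorem stmt1 (G H : Type*) [AddCommGroup G] [Finite G] [AddCommGroup H] [Finite H]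
    (d : ℕ) (hd : 1 ≤ d) :
    Nonempty ((Hmg d G H) ≃+ TensorProduct ℤ (Hmg d G QZ) H) := by
  classical
  have : Fact ((0 : ℚ) < 1) := ⟨one_pos⟩
  have : Fintype (CyclicClass G) := Fintype.ofFinite _
  let e (s : CyclicClass G) : ℕ := homogeneityExponent d (addOrderOf s.out)
  have he (s : CyclicClass G) : e s ≠ 0 :=
    homogeneityExponent_ne_zero (by omega) (addOrderOf_pos s.out).ne'
  let tensorEquiv (s : CyclicClass G) : ZMod (e s) ⊗[ℤ] H ≃+ torsionBy H (e s) :=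
    Classical.choice (nonempty_tensorZModEquivTorsionBy (e s) H)
  let zmodEquivHmg : (∀ s, ZMod (e s)) ≃+ Hmg d G QZ :=
    (AddEquiv.piCongrRight fun s => AddCircle.zmodEquivTorsionBy (he s)).trans
      hmgEquivClassValues.symm
  exact ⟨hmgEquivClassValues.trans <|
    (AddEquiv.piCongrRight fun s => (tensorEquiv s).symm).trans <|
    (TensorProduct.piLeft ℤ H fun s => ZMod (e s)).symm.toAddEquiv.trans <|
    (TensorProduct.congr zmodEquivHmg.toIntLinearEquiv (LinearEquiv.refl ℤ H)).toAddEquiv⟩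
end
end

section
/- Let G be a finite abelian group. Then G[0] is a free abelian group of rank equal to the number of cyclic subgroups of G. -/
open scoped DirectSum

noncomputable section

/-- The subgroup of relations `[n • x] - n ^ d • [x]` (for `n` coprime to the order of `x`)
defining `G[d]`. -/
def hrel (d : ℕ) (G : Type*) [AddCommGroup G] : AddSubgroup (FreeAbelianGroup G) :=
  AddSubgroup.closure
    {z | ∃ (x : G) (n : ℤ), IsCoprime n (addOrderOf x : ℤ) ∧
      z = FreeAbelianGroup.of (n • x) - n ^ d • FreeAbelianGroup.of x}

/-- `G[d]`, the quotient of the free abelian group on (the underlying set of) `G` by the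
subgroup generated by the elements `[n • x] - n ^ d • [x]` for `n` coprime to the order of `x`. -/
abbrev GBr (d : ℕ) (G : Type*) [AddCommGroup G] : Type _ :=
  FreeAbelianGroup G ⧸ hrel d G

/-- The canonical map `G → G[d]`, `x ↦ [x]`. -/
def brk (d : ℕ) {G : Type*} [AddCommGroup G] (x : G) : GBr d G :=
  QuotientAddGroup.mk (FreeAbelianGroup.of x)

/-! `[x] ∈ G[0]` depends only on the cyclic subgroup generated by `x`, because two generators of
the same cyclic subgroup differ by a multiplier coprime to their order. Conversely
`[x] ↦ ⟨x⟩` is well defined on `G[0]`, so `G[0]` is free on the set of cyclic subgroups. -/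

namespace GBr

variable {G : Type*} [AddCommGroup G]

open AddSubgroup

theorem zmultiples_zsmul_eq_iff {x : G} {n : ℤ} :
    zmultiples (n • x) = zmultiples x ↔ IsCoprime n (addOrderOf x : ℤ) := by
  rw [Int.isCoprime_iff_gcd_eq_one, ← mem_zmultiples_zsmul_iff]
  refine ⟨fun h ↦ h ▸ mem_zmultiples x, fun h ↦ le_antisymm ?_ (zmultiples_le.2 h)⟩
  exact zmultiples_le.2 (zsmul_mem (mem_zmultiples x) n)

theorem exists_isCoprime_zsmul_eq_of_zmultiples_eq {x y : G}
    (h : zmultiples y = zmultiples x) :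
    ∃ n : ℤ, IsCoprime n (addOrderOf x : ℤ) ∧ n • x = y := by
  obtain ⟨n, rfl⟩ := mem_zmultiples_iff.1 (h ▸ mem_zmultiples y)
  exact ⟨n, zmultiples_zsmul_eq_iff.1 h, rfl⟩

theorem brk_zero_zsmul {x : G} {n : ℤ} (h : IsCoprime n (addOrderOf x : ℤ)) :
    brk 0 (n • x) = brk 0 x := by
  refine (QuotientAddGroup.eq_iff_sub_mem).2 (subset_closure ⟨x, n, h, ?_⟩)
  rw [pow_zero, one_smul]

theorem brk_zero_eq_of_zmultiples_eq {x y : G} (h : zmultiples y = zmultiples x) :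
    brk 0 y = brk 0 x := by
  obtain ⟨n, hn, rfl⟩ := exists_isCoprime_zsmul_eq_of_zmultiples_eq h
  exact brk_zero_zsmul hn

def cyclicAddSubgroup (x : G) : {C : AddSubgroup G // IsAddCyclic C} :=
  ⟨zmultiples x, inferInstance⟩

theorem cyclicAddSubgroup_surjective : Function.Surjective (cyclicAddSubgroup (G := G)) := by
  rintro ⟨C, hC⟩
  obtain ⟨x, rfl⟩ := (AddSubgroup.isAddCyclic_iff_exists_zmultiples_eq_top C).1 hC
  exact ⟨x, rfl⟩

theorem cyclicAddSubgroup_zsmul {x : G} {n : ℤ} (h : IsCoprime n (addOrderOf x : ℤ)) :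
    cyclicAddSubgroup (n • x) = cyclicAddSubgroup x :=
  Subtype.ext (zmultiples_zsmul_eq_iff.2 h)

def toFreeCyclic : GBr 0 G →+ FreeAbelianGroup {C : AddSubgroup G // IsAddCyclic C} :=
  QuotientAddGroup.lift _ (FreeAbelianGroup.map cyclicAddSubgroup) <| by
    rw [hrel, closure_le]
    rintro _ ⟨x, n, hn, rfl⟩
    simp [FreeAbelianGroup.map_of_apply, cyclicAddSubgroup_zsmul hn]

theorem toFreeCyclic_brk (x : G) :
    toFreeCyclic (brk 0 x) = FreeAbelianGroup.of (cyclicAddSubgroup x) :=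
  FreeAbelianGroup.map_of_apply x

def ofFreeCyclic : FreeAbelianGroup {C : AddSubgroup G // IsAddCyclic C} →+ GBr 0 G :=
  FreeAbelianGroup.lift fun C ↦ brk 0 (Function.surjInv cyclicAddSubgroup_surjective C)

theorem ofFreeCyclic_of_cyclicAddSubgroup (x : G) :
    ofFreeCyclic (FreeAbelianGroup.of (cyclicAddSubgroup x)) = brk 0 x := by
  rw [ofFreeCyclic, FreeAbelianGroup.lift_apply_of]
  exact brk_zero_eq_of_zmultiples_eq
    (congrArg Subtype.val (Function.surjInv_eq cyclicAddSubgroup_surjective _))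

def zeroEquivFreeCyclic : GBr 0 G ≃+ FreeAbelianGroup {C : AddSubgroup G // IsAddCyclic C} :=
  AddMonoidHom.toAddEquiv toFreeCyclic ofFreeCyclic
    (QuotientAddGroup.addMonoidHom_ext _ <| FreeAbelianGroup.lift_ext _ _ fun x ↦ by
      simp only [AddMonoidHom.comp_apply, QuotientAddGroup.mk'_apply, AddMonoidHom.id_apply]
      exact (congrArg ofFreeCyclic (toFreeCyclic_brk x)).trans
        (ofFreeCyclic_of_cyclicAddSubgroup x))
    (FreeAbelianGroup.lift_ext _ _ fun C ↦ by
      obtain ⟨x, rfl⟩ := cyclicAddSubgroup_surjective C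
      simp only [AddMonoidHom.comp_apply, AddMonoidHom.id_apply]
      rw [ofFreeCyclic_of_cyclicAddSubgroup, toFreeCyclic_brk])

end GBr

theorem stmt2 (G : Type*) [AddCommGroup G] [Finite G] :
    Nonempty (GBr 0 G ≃+ (Fin (Nat.card {C : AddSubgroup G // IsAddCyclic C}) → ℤ)) :=
  ⟨GBr.zeroEquivFreeCyclic.trans <| (FreeAbelianGroup.equivFinsupp _).trans <|
    Finsupp.addEquivFunOnFinite.trans <|
      AddEquiv.arrowCongr (Finite.equivFin _) (AddEquiv.refl ℤ)⟩

end
end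

section
/- Let G be a finite abelian group and d ≥ 1 an integer. Then there is an isomorphism of abelian groups G[d] ≅ ⊕_C ℤ/o_d(|C|), where the direct sum runs over all cyclic subgroups C of G and |C| denotes the order of C. -/
open scoped DirectSum

noncomputable section

/-- `o_d(k)`: the gcd, taken as a nonnegative integer, of the set
`{u ^ d - 1 | u ≡ 1 (mod k)}`, realized as the nonnegative generator of the ideal of `ℤ`
spanned by this set. -/
def oo (d k : ℕ) : ℕ :=
  (Submodule.IsPrincipal.generator
    (Ideal.span {z : ℤ | ∃ u : ℤ, (k : ℤ) ∣ (u - 1) ∧ z = u ^ d - 1})).natAbs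

/-!
Each `x : G` generates a cyclic subgroup `C`; fixing a generator `g_C`, we get `x = a • g_C` with
`a` a unit modulo `|C|`, so the relations force `[x] = a ^ d • [g_C]`. Moreover `[g_C]` is killed
by `u ^ d - 1` for every `u ≡ 1 (mod |C|)`, hence by `o_d(|C|)`. Thus `[x] ↦ a ^ d` (in the
`C`-summand) and `1_C ↦ [g_C]` are mutually inverse. The first map is well defined because
`a ≡ b (mod k)` with `a` a unit mod `k` gives `a ^ d ≡ b ^ d (mod o_d(k))`: for an inverse `w`
of `a` mod `k`, both `(w a) ^ d` and `(w b) ^ d` are `≡ 1`.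
-/

section Arithmetic

open Submodule (IsPrincipal)

/-- The ideal whose nonnegative generator is `oo d k`. -/
def powSubOneIdeal (d k : ℕ) : Ideal ℤ :=
  Ideal.span {z : ℤ | ∃ u : ℤ, (k : ℤ) ∣ (u - 1) ∧ z = u ^ d - 1}

lemma natCast_oo_mem_powSubOneIdeal (d k : ℕ) : (oo d k : ℤ) ∈ powSubOneIdeal d k := by
  rw [← IsPrincipal.span_singleton_generator (powSubOneIdeal d k)]
  exact Ideal.mem_span_singleton.2 (Int.dvd_natAbs.2 dvd_rfl)

lemma pow_modEq_one_oo {d k : ℕ} {u : ℤ} (h : u ≡ 1 [ZMOD k]) :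
    u ^ d ≡ 1 [ZMOD oo d k] := by
  have hmem : u ^ d - 1 ∈ powSubOneIdeal d k := Ideal.subset_span ⟨u, h.symm.dvd, rfl⟩
  exact (Int.modEq_iff_dvd.2 (Int.natAbs_dvd.2 ((IsPrincipal.mem_iff_generator_dvd _).1 hmem))).symm

lemma pow_modEq_pow_oo {d k : ℕ} {u v : ℤ} (hu : IsCoprime u k) (h : u ≡ v [ZMOD k]) :
    u ^ d ≡ v ^ d [ZMOD oo d k] := by
  obtain ⟨w, t, hwt⟩ := hu
  have hwu : w * u ≡ 1 [ZMOD k] := Int.modEq_iff_dvd.2 ⟨t, by linarith⟩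
  have hwv : w * v ≡ 1 [ZMOD k] := (h.mul_left w).symm.trans hwu
  calc u ^ d = u ^ d * 1 := (mul_one _).symm
    _ ≡ u ^ d * (w * v) ^ d [ZMOD oo d k] := (pow_modEq_one_oo hwv).symm.mul_left _
    _ = (w * u) ^ d * v ^ d := by ring
    _ ≡ 1 * v ^ d [ZMOD oo d k] := (pow_modEq_one_oo hwu).mul_right _
    _ = v ^ d := one_mul _

end Arithmetic

section CyclicSubgroups

variable {G : Type*} [AddCommGroup G]

open AddSubgroup

lemma mem_zmultiples_zsmul_iff_isCoprime {x : G} {n : ℤ} :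
    x ∈ zmultiples (n • x) ↔ IsCoprime n (addOrderOf x) :=
  mem_zmultiples_zsmul_iff.trans Int.isCoprime_iff_gcd_eq_one.symm

lemma zmultiples_zsmul_of_isCoprime {x : G} {n : ℤ} (h : IsCoprime n (addOrderOf x)) :
    zmultiples (n • x) = zmultiples x :=
  le_antisymm (zmultiples_le.2 (zsmul_mem_zmultiples x n))
    (zmultiples_le.2 (mem_zmultiples_zsmul_iff_isCoprime.2 h))

variable (G) in
abbrev CyclicAddSubgroup := {C : AddSubgroup G // IsAddCyclic C}

namespace CyclicAddSubgroup

def of (x : G) : CyclicAddSubgroup G := ⟨zmultiples x, inferInstance⟩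

def generator (C : CyclicAddSubgroup G) : G :=
  ((AddSubgroup.isAddCyclic_iff_exists_zmultiples_eq_top C.1).1 C.2).choose

lemma zmultiples_generator (C : CyclicAddSubgroup G) : zmultiples (generator C) = C.1 :=
  ((AddSubgroup.isAddCyclic_iff_exists_zmultiples_eq_top C.1).1 C.2).choose_spec

lemma of_generator (C : CyclicAddSubgroup G) : of (generator C) = C :=
  Subtype.ext (zmultiples_generator C)

lemma addOrderOf_generator (C : CyclicAddSubgroup G) : addOrderOf (generator C) = Nat.card C.1 := by
  rw [← Nat.card_zmultiples, zmultiples_generator]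

lemma of_zsmul {x : G} {n : ℤ} (h : IsCoprime n (addOrderOf x)) : of (n • x) = of x :=
  Subtype.ext (zmultiples_zsmul_of_isCoprime h)

lemma mem_zmultiples_generator_of (x : G) : x ∈ zmultiples (generator (of x)) := by
  rw [zmultiples_generator]; exact mem_zmultiples x

/-- The discrete logarithm of `x` to the base `generator (of x)`. -/
def dlog (x : G) : ℤ := (mem_zmultiples_iff.1 (mem_zmultiples_generator_of x)).choose

lemma dlog_zsmul_generator (x : G) : dlog x • generator (of x) = x :=
  (mem_zmultiples_iff.1 (mem_zmultiples_generator_of x)).choose_spec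

lemma isCoprime_dlog (x : G) : IsCoprime (dlog x) (addOrderOf (generator (of x))) := by
  rw [← mem_zmultiples_zsmul_iff_isCoprime, dlog_zsmul_generator]
  exact (zmultiples_generator (of x)).le (mem_zmultiples _)

lemma dlog_zsmul_modEq {x : G} {n : ℤ} (h : IsCoprime n (addOrderOf x)) :
    dlog (n • x) ≡ n * dlog x [ZMOD addOrderOf (generator (of x))] := by
  rw [← zsmul_eq_zsmul_iff_modEq, mul_smul, dlog_zsmul_generator, ← of_zsmul h,
    dlog_zsmul_generator]

lemma dlog_generator_modEq (C : CyclicAddSubgroup G) :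
    dlog (generator C) ≡ 1 [ZMOD addOrderOf (generator C)] := by
  rw [← zsmul_eq_zsmul_iff_modEq, one_smul]
  simpa only [of_generator] using dlog_zsmul_generator (generator C)

end CyclicAddSubgroup

end CyclicSubgroups

namespace GBr

variable {G : Type*} [AddCommGroup G] (d : ℕ)

open CyclicAddSubgroup
open scoped Classical

lemma brk_zsmul {x : G} {n : ℤ} (h : IsCoprime n (addOrderOf x)) :
    brk d (n • x) = n ^ d • brk d x := by
  rw [← sub_eq_zero, brk, brk, ← QuotientAddGroup.mk_zsmul, ← QuotientAddGroup.mk_sub,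
    QuotientAddGroup.eq_zero_iff]
  exact AddSubgroup.subset_closure ⟨x, n, h, rfl⟩

lemma oo_zsmul_brk (x : G) : (oo d (addOrderOf x) : ℤ) • brk d x = 0 := by
  suffices powSubOneIdeal d (addOrderOf x) ≤ Ideal.torsionOf ℤ (GBr d G) (brk d x) from
    this (natCast_oo_mem_powSubOneIdeal d _)
  refine Ideal.span_le.2 ?_
  rintro _ ⟨u, ⟨t, ht⟩, rfl⟩
  have hcop : IsCoprime u (addOrderOf x) := ⟨1, -t, by linarith⟩
  have hux : u • x = x := by
    rw [← one_smul ℤ x, smul_smul, mul_one, zsmul_eq_zsmul_iff_modEq]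
    exact (Int.modEq_iff_dvd.2 ⟨t, ht⟩).symm
  rw [SetLike.mem_coe, Ideal.mem_torsionOf_iff, sub_smul, one_smul, ← brk_zsmul d hcop, hux,
    sub_self]

def single (C : CyclicAddSubgroup G) :
    ℤ →+ ⨁ C : CyclicAddSubgroup G, ZMod (oo d (Nat.card C.1)) :=
  (DirectSum.of _ C).comp (Int.castAddHom _)

lemma single_congr (C : CyclicAddSubgroup G) {a b : ℤ} (h : a ≡ b [ZMOD oo d (Nat.card C.1)]) :
    single d C a = single d C b :=
  congrArg (DirectSum.of _ C) ((ZMod.intCast_eq_intCast_iff _ _ _).2 h)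

def ofDirectSum : (⨁ C : CyclicAddSubgroup G, ZMod (oo d (Nat.card C.1))) →+ GBr d G :=
  DirectSum.toAddMonoid fun C => ZMod.lift _ ⟨zmultiplesHom _ (brk d (generator C)), by
    simpa only [zmultiplesHom_apply, ← addOrderOf_generator] using oo_zsmul_brk d (generator C)⟩

lemma ofDirectSum_single (C : CyclicAddSubgroup G) (b : ℤ) :
    ofDirectSum d (single d C b) = b • brk d (generator C) := by
  simp [ofDirectSum, single]

def singleDlogPow (x : G) : ⨁ C : CyclicAddSubgroup G, ZMod (oo d (Nat.card C.1)) :=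
  single d (of x) (dlog x ^ d)

lemma singleDlogPow_zsmul {x : G} {n : ℤ} (h : IsCoprime n (addOrderOf x)) :
    singleDlogPow d (n • x) = n ^ d • singleDlogPow d x := by
  have hmod : dlog (n • x) ^ d ≡ (n * dlog x) ^ d [ZMOD oo d (Nat.card (of x).1)] := by
    rw [← addOrderOf_generator]
    refine pow_modEq_pow_oo ?_ (dlog_zsmul_modEq h)
    simpa only [of_zsmul h] using isCoprime_dlog (n • x)
  rw [singleDlogPow, singleDlogPow, of_zsmul h, single_congr d _ hmod, mul_pow, ← smul_eq_mul,
    map_zsmul]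

def toDirectSum : GBr d G →+ ⨁ C : CyclicAddSubgroup G, ZMod (oo d (Nat.card C.1)) :=
  QuotientAddGroup.lift _ (FreeAbelianGroup.lift (singleDlogPow d)) <| by
    rw [hrel, AddSubgroup.closure_le]
    rintro _ ⟨x, n, h, rfl⟩
    simp [singleDlogPow_zsmul d h]

lemma toDirectSum_brk (x : G) : toDirectSum d (brk d x) = singleDlogPow d x :=
  FreeAbelianGroup.lift_apply_of _ _

lemma ofDirectSum_comp_toDirectSum :
    (ofDirectSum d).comp (toDirectSum d) = AddMonoidHom.id (GBr d G) := by
  refine QuotientAddGroup.addMonoidHom_ext _ (FreeAbelianGroup.lift_ext _ _ fun x => ?_)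
  change ofDirectSum d (toDirectSum d (brk d x)) = brk d x
  rw [toDirectSum_brk, singleDlogPow, ofDirectSum_single, ← brk_zsmul d (isCoprime_dlog x),
    dlog_zsmul_generator]

lemma toDirectSum_comp_ofDirectSum :
    (toDirectSum d).comp (ofDirectSum d) =
      AddMonoidHom.id (⨁ C : CyclicAddSubgroup G, ZMod (oo d (Nat.card C.1))) := by
  refine DirectSum.addHom_ext' fun C => AddMonoidHom.ext fun y => ?_
  obtain ⟨b, rfl⟩ := ZMod.intCast_surjective y
  change toDirectSum d (ofDirectSum d (single d C b)) = single d C b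
  have hdlog : dlog (generator C) ^ d ≡ 1 [ZMOD oo d (Nat.card C.1)] :=
    pow_modEq_one_oo (addOrderOf_generator C ▸ dlog_generator_modEq C)
  rw [ofDirectSum_single, map_zsmul, toDirectSum_brk, singleDlogPow, of_generator,
    single_congr d C hdlog, ← map_zsmul, smul_eq_mul, mul_one]

end GBr

theorem stmt3_general (G : Type*) [AddCommGroup G] (d : ℕ) :
    Nonempty (GBr d G ≃+
      ⨁ C : {C : AddSubgroup G // IsAddCyclic C}, ZMod (oo d (Nat.card C.1))) :=
  ⟨AddMonoidHom.toAddEquiv (GBr.toDirectSum d) (GBr.ofDirectSum d)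
    (GBr.ofDirectSum_comp_toDirectSum d) (GBr.toDirectSum_comp_ofDirectSum d)⟩

theorem stmt3 (G : Type*) [AddCommGroup G] [Finite G] (d : ℕ) (hd : 1 ≤ d) :
    Nonempty (GBr d G ≃+
      ⨁ C : {C : AddSubgroup G // IsAddCyclic C}, ZMod (oo d (Nat.card C.1))) :=
  stmt3_general G d

end
end

section
/- Let G be a finite abelian group, d ≥ 1 an integer, and x ∈ G. Then the order of the element [x] in the abelian group G[d] equals o_d(o(x)), where o(x) is the order of x in G. -/
open scoped DirectSum

noncomputable section

/-!
Write `k` for the order of `x`. If `u ≡ 1 (mod k)` then `u • x = x`, so the defining relation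
gives `(u ^ d - 1) • [x] = 0`; hence `o_d(k) • [x] = 0`. Conversely, if `u` is a unit mod `k`
and `u ≡ v (mod k)`, then `u ^ d ≡ v ^ d (mod o_d(k))` (multiply by `a ^ d` with `a u ≡ 1`).
So `u • x ↦ u ^ d` is a well-defined map from the orbit of `x` under the units mod `k` to
`ℤ / o_d(k)`; extended by zero it respects the relations of `G[d]`, and the induced character
sends `[x]` to `1`, an element of order exactly `o_d(k)`.
-/

lemma span_oo (d k : ℕ) :
    Ideal.span {(oo d k : ℤ)} =
      Ideal.span {z : ℤ | ∃ u : ℤ, (k : ℤ) ∣ u - 1 ∧ z = u ^ d - 1} := by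
  rw [oo, Int.span_natAbs]
  exact Ideal.span_singleton_generator _

lemma oo_dvd_pow_sub_one {d k : ℕ} {u : ℤ} (hu : (k : ℤ) ∣ u - 1) :
    (oo d k : ℤ) ∣ u ^ d - 1 :=
  Ideal.mem_span_singleton.mp (span_oo d k ▸ Ideal.subset_span ⟨u, hu, rfl⟩)

lemma oo_dvd_pow_sub_pow {d k : ℕ} {u v : ℤ} (hu : IsCoprime u k) (huv : (k : ℤ) ∣ u - v) :
    (oo d k : ℤ) ∣ u ^ d - v ^ d := by
  obtain ⟨a, b, hab⟩ := hu
  have hau : (k : ℤ) ∣ a * u - 1 := ⟨-b, by linear_combination hab⟩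
  have hav : (k : ℤ) ∣ a * v - 1 := by
    rw [show a * v - 1 = a * u - 1 - a * (u - v) by ring]
    exact dvd_sub hau (huv.mul_left a)
  obtain ⟨c, hc⟩ := oo_dvd_pow_sub_one (d := d) hau
  have hcop : IsCoprime (oo d k : ℤ) (a ^ d) :=
    ⟨-c, u ^ d, by rw [mul_pow] at hc; linear_combination hc⟩
  refine hcop.dvd_of_dvd_mul_left ?_
  have h := dvd_sub (oo_dvd_pow_sub_one (d := d) hau) (oo_dvd_pow_sub_one (d := d) hav)
  rwa [mul_pow, mul_pow, sub_sub_sub_cancel_right, ← mul_sub] at h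

section

variable {G : Type*} [AddCommGroup G]

lemma addOrderOf_zsmul_of_isCoprime {y : G} {n : ℤ} (h : IsCoprime n (addOrderOf y)) :
    addOrderOf (n • y) = addOrderOf y := by
  refine Nat.dvd_antisymm ?_ ?_
  · apply addOrderOf_dvd_of_nsmul_eq_zero
    rw [smul_comm, addOrderOf_nsmul_eq_zero, smul_zero]
  · refine Int.natCast_dvd_natCast.mp (h.symm.dvd_of_dvd_mul_right ?_)
    rw [addOrderOf_dvd_iff_zsmul_eq_zero, mul_smul, natCast_zsmul, addOrderOf_nsmul_eq_zero]

lemma zsmul_eq_self_of_dvd_sub_one {y : G} {u : ℤ} (h : (addOrderOf y : ℤ) ∣ u - 1) :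
    u • y = y := by
  simpa using (zsmul_eq_zsmul_iff_modEq (m := u) (n := 1)).mpr (Int.modEq_iff_dvd.mpr h).symm

def coprimeOrbit (x : G) : Set G :=
  {y | ∃ u : ℤ, IsCoprime u (addOrderOf x) ∧ u • x = y}

lemma mem_coprimeOrbit_of_zsmul_mem {x y : G} {n : ℤ} (hn : IsCoprime n (addOrderOf y))
    (h : n • y ∈ coprimeOrbit x) : y ∈ coprimeOrbit x := by
  obtain ⟨u, hu, hux⟩ := h
  have hord : addOrderOf y = addOrderOf x := by
    rw [← addOrderOf_zsmul_of_isCoprime hn, ← hux, addOrderOf_zsmul_of_isCoprime hu]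
  obtain ⟨a, b, hab⟩ := hn
  have ha : IsCoprime a (addOrderOf x) := hord ▸ ⟨n, b, by linear_combination hab⟩
  refine ⟨a * u, ha.mul_left hu, ?_⟩
  rw [mul_smul, hux, ← mul_smul, zsmul_eq_self_of_dvd_sub_one ⟨-b, by linear_combination hab⟩]

open Classical in
def coprimeOrbitPow (d : ℕ) (x y : G) : ZMod (oo d (addOrderOf x)) :=
  if h : y ∈ coprimeOrbit x then (h.choose : ZMod (oo d (addOrderOf x))) ^ d else 0

lemma coprimeOrbitPow_zsmul_self (d : ℕ) {x : G} {u : ℤ} (hu : IsCoprime u (addOrderOf x)) :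
    coprimeOrbitPow d x (u • x) = (u : ZMod (oo d (addOrderOf x))) ^ d := by
  have h : u • x ∈ coprimeOrbit x := ⟨u, hu, rfl⟩
  obtain ⟨hv, hvx⟩ := h.choose_spec
  have hvu : (addOrderOf x : ℤ) ∣ h.choose - u := by
    rw [addOrderOf_dvd_iff_zsmul_eq_zero, sub_smul, hvx, sub_self]
  rw [coprimeOrbitPow, dif_pos h, ← Int.cast_pow, ← Int.cast_pow,
    ZMod.intCast_eq_intCast_iff_dvd_sub]
  exact dvd_sub_comm.mp (oo_dvd_pow_sub_pow hv hvu)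

lemma coprimeOrbitPow_zsmul (d : ℕ) (x : G) {y : G} {n : ℤ} (hn : IsCoprime n (addOrderOf y)) :
    coprimeOrbitPow d x (n • y) =
      (n : ZMod (oo d (addOrderOf x))) ^ d * coprimeOrbitPow d x y := by
  by_cases hy : y ∈ coprimeOrbit x
  · obtain ⟨u, hu, rfl⟩ := hy
    rw [addOrderOf_zsmul_of_isCoprime hu] at hn
    rw [smul_smul, coprimeOrbitPow_zsmul_self d (hn.mul_left hu), coprimeOrbitPow_zsmul_self d hu,
      Int.cast_mul, mul_pow]
  · have hny : n • y ∉ coprimeOrbit x := fun h => hy (mem_coprimeOrbit_of_zsmul_mem hn h)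
    rw [coprimeOrbitPow, dif_neg hny, coprimeOrbitPow, dif_neg hy, mul_zero]

lemma brk_zsmul (d : ℕ) {x : G} {n : ℤ} (h : IsCoprime n (addOrderOf x)) :
    brk d (n • x) = n ^ d • brk d x := by
  rw [brk, brk, ← QuotientAddGroup.mk_zsmul, QuotientAddGroup.eq_iff_sub_mem]
  exact AddSubgroup.subset_closure ⟨x, n, h, rfl⟩

lemma oo_zsmul_brk (d : ℕ) (x : G) : (oo d (addOrderOf x) : ℤ) • brk d x = 0 := by
  suffices Ideal.span {(oo d (addOrderOf x) : ℤ)} ≤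
      LinearMap.ker (LinearMap.toSpanSingleton ℤ (GBr d G) (brk d x)) from
    this (Ideal.mem_span_singleton_self _)
  rw [span_oo, Ideal.span_le]
  rintro _ ⟨u, ⟨t, ht⟩, rfl⟩
  have hu : IsCoprime u (addOrderOf x) := ⟨1, -t, by linear_combination ht⟩
  have hux : u • x = x := zsmul_eq_self_of_dvd_sub_one ⟨t, ht⟩
  simp only [SetLike.mem_coe, LinearMap.mem_ker, LinearMap.toSpanSingleton_apply, sub_smul,
    one_smul, ← brk_zsmul d hu, hux, sub_self]

def brkChar (d : ℕ) (x : G) : GBr d G →+ ZMod (oo d (addOrderOf x)) :=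
  QuotientAddGroup.lift (hrel d G) (FreeAbelianGroup.lift (coprimeOrbitPow d x)) <| by
    refine (AddSubgroup.closure_le _).mpr ?_
    rintro _ ⟨y, n, hn, rfl⟩
    simp only [SetLike.mem_coe, AddMonoidHom.mem_ker, map_sub, map_zsmul,
      FreeAbelianGroup.lift_apply_of, coprimeOrbitPow_zsmul d x hn, zsmul_eq_mul, Int.cast_pow,
      sub_self]

lemma brkChar_brk_self (d : ℕ) (x : G) : brkChar d x (brk d x) = 1 := by
  refine (FreeAbelianGroup.lift_apply_of _ x).trans ?_
  simpa using coprimeOrbitPow_zsmul_self d (x := x) isCoprime_one_left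

end

theorem stmt4_general (G : Type*) [AddCommGroup G] (d : ℕ) (x : G) :
    addOrderOf (brk d x) = oo d (addOrderOf x) := by
  refine Nat.dvd_antisymm ?_ ?_
  · exact Int.natCast_dvd_natCast.mp (addOrderOf_dvd_iff_zsmul_eq_zero.mpr (oo_zsmul_brk d x))
  · simpa [brkChar_brk_self, ZMod.addOrderOf_one] using addOrderOf_map_dvd (brkChar d x) (brk d x)

theorem stmt4 (G : Type*) [AddCommGroup G] [Finite G] (d : ℕ) (hd : 1 ≤ d) (x : G) :
    addOrderOf (brk d x) = oo d (addOrderOf x) :=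
  stmt4_general G d x

end
end

section
/- Let d and k be positive integers and let p be a prime dividing k. Then v_p(o_d(k)) ≥ v_p(k) + v_p(d), and if p is odd then v_p(o_d(k)) = v_p(k) + v_p(d). Here v_p(m) denotes the p-adic valuation of m, i.e. the exponent of the highest power of p dividing m. -/
open scoped DirectSum

noncomputable section

/-! Lower bound: if `x ≡ y (mod n ^ m)` with `m ≥ 1` then `x ^ n ≡ y ^ n (mod n ^ (m + 1))`,
since `(x ^ n - y ^ n) / (x - y) ≡ n * x ^ (n - 1) ≡ 0 (mod n)`; iterating this `v_p(d)` times
with `n = p` and `u ≡ 1 (mod p ^ v_p(k))` gives `p ^ (v_p(k) + v_p(d)) ∣ u ^ (p ^ v_p(d)) - 1`,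
which divides `u ^ d - 1`. For odd `p` the element `(1 + k) ^ d - 1` of the set has valuation
exactly `v_p(k) + v_p(d)` by the lifting-the-exponent lemma, so it pins `v_p(o_d(k))` from above. -/

section LiftingTheExponent

variable {R : Type*} [CommRing R] {n m : ℕ} {x y : R}

theorem pow_succ_dvd_pow_sub_pow_of_pow_dvd_sub (hm : m ≠ 0) (h : (n : R) ^ m ∣ x - y) :
    (n : R) ^ (m + 1) ∣ x ^ n - y ^ n := by
  have hn : (n : R) ∣ x - y := (dvd_pow_self _ hm).trans h
  rw [← geom_sum₂_mul, pow_succ']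
  exact mul_dvd_mul (dvd_geom_sum₂_self hn) h

theorem pow_add_dvd_pow_pow_sub_pow_pow_of_pow_dvd_sub (hm : m ≠ 0) (h : (n : R) ^ m ∣ x - y)
    (j : ℕ) : (n : R) ^ (m + j) ∣ x ^ n ^ j - y ^ n ^ j := by
  induction j with
  | zero => simpa using h
  | succ j ih =>
    rw [← add_assoc, pow_succ n j, pow_mul, pow_mul]
    exact pow_succ_dvd_pow_sub_pow_of_pow_dvd_sub (by omega) ih

theorem pow_add_padicValNat_dvd_pow_sub_one {p a : ℕ} (ha : a ≠ 0) {u : R}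
    (hu : (p : R) ^ a ∣ u - 1) (d : ℕ) :
    (p : R) ^ (a + padicValNat p d) ∣ u ^ d - 1 := by
  obtain ⟨e, he⟩ : p ^ padicValNat p d ∣ d := pow_padicValNat_dvd
  have hpow := pow_add_dvd_pow_pow_sub_pow_pow_of_pow_dvd_sub ha hu (padicValNat p d)
  rw [one_pow] at hpow
  have hud : u ^ d - 1 = (u ^ p ^ padicValNat p d) ^ e - 1 ^ e := by
    rw [one_pow, ← pow_mul, ← he]
  exact hud ▸ hpow.trans (sub_dvd_pow_sub_pow _ _ e)

end LiftingTheExponent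

theorem dvd_oo_iff {d k m : ℕ} :
    m ∣ oo d k ↔ ∀ u : ℤ, (k : ℤ) ∣ u - 1 → (m : ℤ) ∣ u ^ d - 1 := by
  set I : Ideal ℤ := Ideal.span {z : ℤ | ∃ u : ℤ, (k : ℤ) ∣ (u - 1) ∧ z = u ^ d - 1}
  calc m ∣ oo d k ↔ (m : ℤ) ∣ Submodule.IsPrincipal.generator I := Int.natCast_dvd.symm
    _ ↔ I ≤ Ideal.span {(m : ℤ)} := by
      rw [← Ideal.span_singleton_le_span_singleton, Ideal.span_singleton_generator]
    _ ↔ _ := by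
      simp only [I, Ideal.span_le, Set.ofPred_subset, SetLike.mem_coe,
        Ideal.mem_span_singleton]
      exact ⟨fun h u hu => h _ ⟨u, hu, rfl⟩, by rintro h _ ⟨u, hu, rfl⟩; exact h u hu⟩

theorem oo_dvd_one_add_pow_sub_one (d k : ℕ) : oo d k ∣ (1 + k) ^ d - 1 := by
  have h := dvd_oo_iff.1 (dvd_refl (oo d k)) (1 + k) (by simp)
  rw [← Int.natCast_dvd_natCast]
  push_cast [Nat.one_le_pow _ _ (by omega : 0 < 1 + k)]
  exact h

theorem stmt9 (d k p : ℕ) (hd : 0 < d) (hk : 0 < k) (hp : p.Prime) (hpk : p ∣ k) :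
    padicValNat p k + padicValNat p d ≤ padicValNat p (oo d k) ∧
      (Odd p → padicValNat p (oo d k) = padicValNat p k + padicValNat p d) := by
  have : Fact p.Prime := ⟨hp⟩
  have hN : (1 + k) ^ d - 1 ≠ 0 :=
    Nat.sub_ne_zero_of_lt (Nat.one_lt_pow hd.ne' (by omega))
  have hoo : oo d k ≠ 0 := ne_zero_of_dvd_ne_zero hN (oo_dvd_one_add_pow_sub_one d k)
  have hlow : p ^ (padicValNat p k + padicValNat p d) ∣ oo d k := by
    refine dvd_oo_iff.2 fun u hu => ?_
    push_cast
    refine pow_add_padicValNat_dvd_pow_sub_one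
      (Nat.one_le_iff_ne_zero.1 (one_le_padicValNat_of_dvd hk.ne' hpk)) (dvd_trans ?_ hu) d
    exact_mod_cast pow_padicValNat_dvd
  have hle := (padicValNat_dvd_iff_le hoo).1 hlow
  refine ⟨hle, fun hodd => le_antisymm ?_ hle⟩
  have hval : padicValNat p ((1 + k) ^ d - 1 ^ d) = padicValNat p k + padicValNat p d := by
    have hcop : ¬ p ∣ 1 + k := fun h =>
      hp.one_lt.ne' (Nat.dvd_one.1 ((Nat.dvd_add_left hpk).1 h))
    simpa using
      padicValNat.pow_sub_pow hodd (by omega : 1 < 1 + k) (by simpa using hpk) hcop hd.ne'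
  rw [one_pow] at hval
  rw [← hval, ← padicValNat_dvd_iff_le hN]
  exact pow_padicValNat_dvd.trans (oo_dvd_one_add_pow_sub_one d k)

end
end

section
/- Let k and s be positive integers and let p be a prime. If p is odd, then o_{p^s}(k) = k·gcd(p,k)^s. If p = 2, then o_{2^s}(k) = k·gcd(2,k)^{s−1}·gcd(4, 2+k). -/
/-!
Write `u ≡ 1 (mod L)` as `u = 1 + L a`. If `p ∣ L` (and `4 ∣ L` when `p = 2`), the binomial
expansion gives `(1 + L a) ^ p = 1 + p L (a + D)` with `L ∣ D ^ 2`, so `a + D` is prime to `L`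
whenever `a` is. Iterating, `u ^ (p ^ s) - 1 = p ^ s L c`, where `c` is prime to `L` if
`u = 1 + L`. This settles `p ∣ k` (take `L = k`) and `k ≡ 2 (mod 4)` (there `u ^ 2 ≡ 1 (mod 4 k)`,
take `L = 4 k`), while for `p ∤ k` already `(1 + k) ^ d - 1 = k (d + k ⋯)`.

In each case `M ∣ u ^ d - 1` for all `u ≡ 1 (mod k)` and one of these values is `M c` with `c`
prime to `k`. This forces `o_d(k) = M`: by the Chinese remainder theorem some `u ≡ 1 (mod k)` has
`u ≡ 0 (mod c)`, and `M` is an integral combination of `M c` and `M (u ^ d - 1)`.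
-/

noncomputable section

section CommRing

variable {R : Type*} [CommRing R]

theorem exists_one_add_pow_eq_cubic (n : ℕ) (x : R) :
    ∃ H : R, (1 + x) ^ n = 1 + n * x + n.choose 2 * x ^ 2 + x ^ 3 * H := by
  induction n with
  | zero => exact ⟨0, by simp⟩
  | succ n ih =>
    obtain ⟨H, hH⟩ := ih
    refine ⟨H + n.choose 2 + x * H, ?_⟩
    rw [pow_succ, hH, Nat.choose_succ_succ, Nat.choose_one_right]
    push_cast
    ring

theorem IsCoprime.add_of_dvd_sq {a D L : R} (ha : IsCoprime a L) (hD : L ∣ D ^ 2) :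
    IsCoprime (a + D) L := by
  obtain ⟨e, he⟩ := hD
  have hprod : (a + D) * (a - D) = a ^ 2 + L * -e := by linear_combination -he
  have : IsCoprime ((a + D) * (a - D)) L := hprod ▸ ha.pow_left.add_mul_left_left (-e)
  exact this.of_mul_left_left

theorem exists_one_add_mul_pow_prime_eq {p : ℕ} (hp : p.Prime) {L : R} (hpL : (p : R) ∣ L)
    (h4 : p = 2 → 4 ∣ L) (a : R) :
    ∃ D : R, (1 + L * a) ^ p = 1 + p * L * (a + D) ∧ L ∣ D ^ 2 := by
  obtain rfl | hodd := hp.eq_two_or_odd'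
  · obtain ⟨L', rfl⟩ := h4 rfl
    exact ⟨2 * L' * a ^ 2, by push_cast; ring, L' * a ^ 4, by ring⟩
  have hp2 : 2 < p := by
    obtain ⟨t, rfl⟩ := hodd
    have := hp.two_le
    omega
  obtain ⟨q, hq⟩ : (p : R) ∣ (p.choose 2 : ℕ) :=
    Nat.cast_dvd_cast (hp.dvd_choose_self two_ne_zero hp2)
  obtain ⟨L', rfl⟩ := hpL
  obtain ⟨H, hH⟩ := exists_one_add_pow_eq_cubic p (p * L' * a)
  refine ⟨p * L' * (q * a ^ 2 + L' * a ^ 3 * H), ?_, dvd_pow (dvd_mul_right _ _) two_ne_zero⟩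
  linear_combination hH + (p * L' * a) ^ 2 * hq

theorem exists_one_add_mul_pow_prime_pow_eq {p : ℕ} (hp : p.Prime) {L : R} (hpL : (p : R) ∣ L)
    (h4 : p = 2 → 4 ∣ L) (a : R) (s : ℕ) :
    ∃ c : R, (1 + L * a) ^ p ^ s = 1 + p ^ s * L * c ∧ (IsCoprime a L → IsCoprime c L) := by
  induction s with
  | zero => exact ⟨a, by simp, id⟩
  | succ s ih =>
    obtain ⟨c, hc, hcop⟩ := ih
    obtain ⟨D, hD, hDL⟩ := exists_one_add_mul_pow_prime_eq hp (L := p ^ s * L)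
      (dvd_mul_of_dvd_right hpL _) (fun h ↦ dvd_mul_of_dvd_right (h4 h) _) c
    refine ⟨c + D, ?_, fun ha ↦ (hcop ha).add_of_dvd_sq (dvd_trans (dvd_mul_left _ _) hDL)⟩
    rw [pow_succ, pow_mul, hc]
    linear_combination hD

theorem mul_dvd_pow_prime_pow_sub_one {p : ℕ} (hp : p.Prime) {L u : R} (hpL : (p : R) ∣ L)
    (h4 : p = 2 → 4 ∣ L) (hu : L ∣ u - 1) (s : ℕ) : p ^ s * L ∣ u ^ p ^ s - 1 := by
  obtain ⟨a, ha⟩ := hu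
  obtain ⟨c, hc, -⟩ := exists_one_add_mul_pow_prime_pow_eq hp hpL h4 a s
  exact ⟨c, by rw [show u = 1 + L * a by linear_combination ha, hc]; ring⟩

end CommRing

theorem four_mul_dvd_sq_sub_one {k u : ℤ} (hk : k % 4 = 2) (hu : k ∣ u - 1) :
    4 * k ∣ u ^ 2 - 1 := by
  obtain ⟨t, ht⟩ := hu
  obtain ⟨e, he⟩ := Int.even_mul_succ_self t
  refine ⟨e + k / 4 * t ^ 2, ?_⟩
  have hk4 : k = 4 * (k / 4) + 2 := by omega
  rw [show u = 1 + k * t by linear_combination ht]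
  linear_combination (2 * k) * he + k * t ^ 2 * hk4

theorem oo_eq_of_dvd_of_eq_mul {d k M : ℕ} (hd : d ≠ 0)
    (hdvd : ∀ u : ℤ, (k : ℤ) ∣ u - 1 → (M : ℤ) ∣ u ^ d - 1) {u c : ℤ} (hu : (k : ℤ) ∣ u - 1)
    (huc : u ^ d - 1 = M * c) (hc : IsCoprime c k) : oo d k = M := by
  set S : Set ℤ := {z : ℤ | ∃ u : ℤ, (k : ℤ) ∣ (u - 1) ∧ z = u ^ d - 1}
  have hspan : Ideal.span S = Ideal.span {(M : ℤ)} := by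
    refine le_antisymm (Ideal.span_le.2 ?_) ((Ideal.span_singleton_le_iff_mem _).2 ?_)
    · rintro _ ⟨v, hv, rfl⟩
      exact Ideal.mem_span_singleton.2 (hdvd v hv)
    · obtain ⟨a, b, hab⟩ := hc
      -- `a * c` is `1` modulo `k` and `0` modulo `c`, so `(a * c) ^ d - 1` is prime to `c`
      have hac : (a * c) ^ d - 1 ∈ Ideal.span S :=
        Ideal.subset_span ⟨a * c, ⟨-b, by linear_combination hab⟩, rfl⟩
      have hMc : (M : ℤ) * c ∈ Ideal.span S := Ideal.subset_span ⟨u, hu, huc.symm⟩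
      obtain ⟨d, rfl⟩ := Nat.exists_eq_succ_of_ne_zero hd
      rw [show (M : ℤ) = a ^ (d + 1) * c ^ d * (M * c) - M * ((a * c) ^ (d + 1) - 1) by ring]
      exact sub_mem (Ideal.mul_mem_left _ _ hMc) (Ideal.mul_mem_left _ _ hac)
  have hgen : Associated (Submodule.IsPrincipal.generator (Ideal.span S)) (M : ℤ) :=
    Ideal.span_singleton_eq_span_singleton.1 ((Ideal.span_singleton_generator _).trans hspan)
  exact Int.natAbs_eq_iff_associated.2 hgen

theorem oo_eq_self_of_coprime {d k : ℕ} (hd : d ≠ 0) (hdk : d.Coprime k) : oo d k = k := by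
  obtain ⟨H, hH⟩ := exists_one_add_pow_eq_cubic d (k : ℤ)
  refine oo_eq_of_dvd_of_eq_mul hd (fun u hu ↦ hu.trans (sub_one_dvd_pow_sub_one u d))
    (u := 1 + k) (c := d + k * (d.choose 2 + k * H)) (by simp) (by rw [hH]; ring) ?_
  exact (Nat.isCoprime_iff_coprime.2 hdk).add_mul_left_left _

theorem oo_prime_pow_eq_mul_of_dvd {p k : ℕ} (hp : p.Prime) (hpk : p ∣ k) (h4 : p = 2 → 4 ∣ k)
    (s : ℕ) : oo (p ^ s) k = k * p ^ s := by
  have hpk' : (p : ℤ) ∣ k := Int.natCast_dvd_natCast.2 hpk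
  have h4' : p = 2 → (4 : ℤ) ∣ k := fun h ↦ Int.natCast_dvd_natCast.2 (h4 h)
  obtain ⟨c, hc, hcop⟩ := exists_one_add_mul_pow_prime_pow_eq hp hpk' h4' 1 s
  refine oo_eq_of_dvd_of_eq_mul (pow_ne_zero s hp.ne_zero) (fun u hu ↦ ?_) (u := 1 + k) (c := c)
    (by simp) ?_ (hcop isCoprime_one_left)
  · rw [Nat.cast_mul, mul_comm, Nat.cast_pow]
    exact mul_dvd_pow_prime_pow_sub_one hp hpk' h4' hu s
  · rw [← mul_one (k : ℤ), hc]
    push_cast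
    ring

theorem oo_two_pow_succ_of_mod_four_eq_two {k : ℕ} (hk : k % 4 = 2) (s : ℕ) :
    oo (2 ^ (s + 1)) k = k * 2 ^ (s + 2) := by
  have hk' : (k : ℤ) % 4 = 2 := by omega
  have h2 : ((2 : ℕ) : ℤ) ∣ 4 * k := dvd_mul_of_dvd_left (by norm_num) _
  have h4 : 2 = 2 → (4 : ℤ) ∣ 4 * k := fun _ ↦ dvd_mul_right _ _
  have hsq (u : ℤ) : u ^ 2 ^ (s + 1) = (u ^ 2) ^ 2 ^ s := by rw [pow_succ', pow_mul]
  have hM : ((k * 2 ^ (s + 2) : ℕ) : ℤ) = 2 ^ s * (4 * k) := by push_cast; ring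
  obtain ⟨c, hc, hcop⟩ := exists_one_add_mul_pow_prime_pow_eq Nat.prime_two h2 h4 (1 + k) s
  -- `1 + k` is its own inverse modulo `4 * k`
  have hunit : IsCoprime (1 + k : ℤ) (4 * k) := by
    have hk4 : (k : ℤ) = 4 * (k / 4) + 2 := by omega
    exact ⟨1 + k, -(k / 4 + 1), by linear_combination k * hk4⟩
  refine oo_eq_of_dvd_of_eq_mul (by positivity) (fun u hu ↦ ?_) (u := 1 + 2 * k) (c := c)
    ⟨2, by ring⟩ ?_ (hcop hunit).of_mul_right_right
  · rw [hM, hsq]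
    exact mul_dvd_pow_prime_pow_sub_one Nat.prime_two h2 h4 (four_mul_dvd_sq_sub_one hk' hu) s
  · rw [hM, hsq, show (1 + 2 * k : ℤ) ^ 2 = 1 + 4 * k * (1 + k) by ring, hc]
    push_cast
    ring

theorem stmt13_general (k s p : ℕ) (hs : 0 < s) (hp : p.Prime) :
    (Odd p → oo (p ^ s) k = k * Nat.gcd p k ^ s) ∧
      (p = 2 → oo (2 ^ s) k = k * Nat.gcd 2 k ^ (s - 1) * Nat.gcd 4 (2 + k)) := by
  refine ⟨fun hodd ↦ ?_, ?_⟩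
  · by_cases hpk : p ∣ k
    · rw [Nat.gcd_eq_left hpk]
      exact oo_prime_pow_eq_mul_of_dvd hp hpk (fun h ↦ absurd (h ▸ hodd) (by decide)) s
    · have hcop : p.Coprime k := (Nat.Prime.coprime_iff_not_dvd hp).2 hpk
      rw [hcop.gcd_eq_one, one_pow, mul_one]
      exact oo_eq_self_of_coprime (pow_ne_zero s hp.ne_zero) (hcop.pow_left s)
  · rintro -
    obtain ⟨s, rfl⟩ : ∃ t, s = t + 1 := ⟨s - 1, by omega⟩
    rw [Nat.add_sub_cancel]
    obtain hk | hk | hk : k % 2 = 1 ∨ k % 4 = 0 ∨ k % 4 = 2 := by omega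
    · have h2k : Nat.Coprime 2 k := Nat.coprime_two_left.2 (Nat.odd_iff.2 hk)
      have h4 : Nat.Coprime 4 (2 + k) :=
        (Nat.coprime_two_left.2 (Nat.odd_iff.2 (by omega))).pow_left 2
      rw [h2k.gcd_eq_one, h4.gcd_eq_one, one_pow, mul_one, mul_one]
      exact oo_eq_self_of_coprime (by positivity) (h2k.pow_left _)
    · have h4 : Nat.gcd 4 (2 + k) = 2 := by
        rw [Nat.gcd_rec, show (2 + k) % 4 = 2 by omega]
        rfl
      rw [Nat.gcd_eq_left (by omega), h4,
        oo_prime_pow_eq_mul_of_dvd Nat.prime_two (by omega) (fun _ ↦ by omega), pow_succ, mul_assoc]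
    · rw [Nat.gcd_eq_left (by omega), Nat.gcd_eq_left (by omega),
        oo_two_pow_succ_of_mod_four_eq_two hk]
      ring

theorem stmt13 (k s p : ℕ) (hk : 0 < k) (hs : 0 < s) (hp : p.Prime) :
    (Odd p → oo (p ^ s) k = k * Nat.gcd p k ^ s) ∧
      (p = 2 → oo (2 ^ s) k = k * Nat.gcd 2 k ^ (s - 1) * Nat.gcd 4 (2 + k)) :=
  stmt13_general k s p hs hp

end
end
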